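/- Let a, b, c, d be positive integers with ad − bc ≠ 0 and let f_A : ℂ² → ℂ² be the monomial map f_A(z,w) = (z^a w^b, z^c w^d). Then the topological degree of the germ of f_A at 0 equals |ad − bc|. -/

import Mathlib

/-!
On the torus `(ℂˣ)²` the map `f_A` is the group endomorphism `(u, v) ↦ (u^a v^b, u^c v^d)`,
functorial in the integer matrix `A`. A unimodular row operation makes `A` upper triangular
without changing the kernel, and the kernel of a triangular monomial map is counted by roots of
unity: it has `|det A|` elements. Since `adj A * A = det A • 1`, these are `|det A|`-th roots of
unity, so the fibre through a point `(z₀, w₀)` of the torus is a coset of the kernel on the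
polytorus `|z| = |z₀|, |w| = |w₀|`, and such fibres lie in every neighbourhood of `0`. A fibre
meeting the coordinate axes is the infinite fibre over `0`, so every finite fibre has at most
`|det A|` points.
-/

open scoped ENat

/-- The topological degree of the germ at `0` of a map `f` whose representative is defined
on the domain `Ω ⊆ ℂ²`: the infimum over open neighborhoods `U ⊆ Ω` of `0` of the supremum,
over points `y` with finite fiber under `f|_U`, of the cardinality of that fiber. -/
noncomputable def topdeg (Ω : Set (ℂ × ℂ)) (f : ℂ × ℂ → ℂ × ℂ) : ℕ∞ :=
  ⨅ (U : Set (ℂ × ℂ)) (_ : IsOpen U ∧ (0 : ℂ × ℂ) ∈ U ∧ U ⊆ Ω),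
    ⨆ (y : ℂ × ℂ) (_ : (U ∩ f ⁻¹' {y}).Finite), ((U ∩ f ⁻¹' {y}).ncard : ℕ∞)

open Matrix

section CommGroup

variable {G : Type*} [CommGroup G]

def monomialHom (A : Matrix (Fin 2) (Fin 2) ℤ) : G × G →* G × G where
  toFun x := (x.1 ^ A 0 0 * x.2 ^ A 0 1, x.1 ^ A 1 0 * x.2 ^ A 1 1)
  map_one' := by simp
  map_mul' x y := by
    simp only [Prod.fst_mul, Prod.snd_mul, mul_zpow, Prod.mk_mul_mk, Prod.mk.injEq]
    constructor <;> exact mul_mul_mul_comm _ _ _ _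

@[simp]
lemma monomialHom_apply (A : Matrix (Fin 2) (Fin 2) ℤ) (x : G × G) :
    monomialHom A x = (x.1 ^ A 0 0 * x.2 ^ A 0 1, x.1 ^ A 1 0 * x.2 ^ A 1 1) := rfl

lemma mem_ker_monomialHom {A : Matrix (Fin 2) (Fin 2) ℤ} {x : G × G} :
    x ∈ (monomialHom A).ker ↔
      x.1 ^ A 0 0 * x.2 ^ A 0 1 = 1 ∧ x.1 ^ A 1 0 * x.2 ^ A 1 1 = 1 := by
  simp [Prod.ext_iff]

lemma monomialHom_mul (P A : Matrix (Fin 2) (Fin 2) ℤ) :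
    monomialHom (G := G) (P * A) = (monomialHom P).comp (monomialHom A) := by
  ext x <;>
    simp only [monomialHom_apply, MonoidHom.comp_apply, mul_apply, Fin.sum_univ_two, mul_zpow,
      ← _root_.zpow_mul, _root_.zpow_add, mul_comm (P _ _)] <;>
    exact mul_mul_mul_comm _ _ _ _

lemma monomialHom_one : monomialHom (G := G) 1 = MonoidHom.id (G × G) := by
  ext x <;> simp

lemma monomialHom_smul_one (n : ℤ) (x : G × G) : monomialHom (n • 1) x = x ^ n := by
  ext <;> simp [Matrix.intCast_apply]

lemma ker_monomialHom_mul {P : Matrix (Fin 2) (Fin 2) ℤ} (hP : IsUnit P)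
    (A : Matrix (Fin 2) (Fin 2) ℤ) :
    (monomialHom (G := G) (P * A)).ker = (monomialHom A).ker := by
  obtain ⟨Q, hQ⟩ := hP.exists_left_inv
  have hinv : Function.LeftInverse (monomialHom (G := G) Q) (monomialHom P) := fun x => by
    rw [← MonoidHom.comp_apply, ← monomialHom_mul, hQ, monomialHom_one, MonoidHom.id_apply]
  rw [monomialHom_mul, MonoidHom.ker_comp_of_injective _ _ hinv.injective]

lemma pow_det_eq_one_of_mem_ker {A : Matrix (Fin 2) (Fin 2) ℤ} {x : G × G}
    (hx : x ∈ (monomialHom A).ker) : x ^ A.det = 1 := by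
  rw [← monomialHom_smul_one, ← adjugate_mul, monomialHom_mul, MonoidHom.comp_apply, hx, map_one]

end CommGroup

lemma exists_det_eq_one_mul_apply_one_zero (A : Matrix (Fin 2) (Fin 2) ℤ) :
    ∃ P : Matrix (Fin 2) (Fin 2) ℤ, P.det = 1 ∧ (P * A) 1 0 = 0 := by
  by_cases hA : A 0 0 = 0 ∧ A 1 0 = 0
  · exact ⟨1, det_one, by simp [hA.2]⟩
  have hg : (Int.gcd (A 0 0) (A 1 0) : ℤ) ≠ 0 := by
    rw [not_and_or] at hA
    exact_mod_cast (Int.gcd_pos_iff.mpr hA).ne'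
  obtain ⟨a', ha'⟩ := Int.gcd_dvd_left (A 0 0) (A 1 0)
  obtain ⟨c', hc'⟩ := Int.gcd_dvd_right (A 0 0) (A 1 0)
  have hbezout := Int.gcd_eq_gcd_ab (A 0 0) (A 1 0)
  refine ⟨!![Int.gcdA (A 0 0) (A 1 0), Int.gcdB (A 0 0) (A 1 0); -c', a'], ?_, ?_⟩
  · refine mul_left_cancel₀ hg ?_
    rw [det_fin_two_of]
    linear_combination -Int.gcdA (A 0 0) (A 1 0) * ha' - Int.gcdB (A 0 0) (A 1 0) * hc' - hbezout
  · simp only [mul_apply, Fin.sum_univ_two, of_apply, cons_val', cons_val_zero, cons_val_one,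
      empty_val', cons_val_fin_one]
    linear_combination -c' * ha' + a' * hc'

lemma Complex.exists_units_zpow_eq (w : ℂˣ) {n : ℤ} (hn : n ≠ 0) :
    ∃ u : ℂˣ, u ^ n = w := by
  refine ⟨Units.mk0 (Complex.exp (Complex.log w / n)) (Complex.exp_ne_zero _), Units.ext ?_⟩
  rw [Units.val_zpow_eq_zpow_val, Units.val_mk0, ← Complex.exp_int_mul,
    mul_div_cancel₀ _ (Int.cast_ne_zero.mpr hn), Complex.exp_log w.ne_zero]

lemma range_snd_comp_ker_monomialHom {T : Matrix (Fin 2) (Fin 2) ℤ} (hT : T 1 0 = 0)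
    (h0 : T 0 0 ≠ 0) :
    ((MonoidHom.snd ℂˣ ℂˣ).comp (monomialHom (G := ℂˣ) T).ker.subtype).range =
      rootsOfUnity (T 1 1).natAbs ℂ := by
  ext v
  simp only [MonoidHom.mem_range, mem_rootsOfUnity, pow_natAbs_eq_one]
  constructor
  · rintro ⟨⟨x, hx⟩, rfl⟩
    simpa [hT] using (mem_ker_monomialHom.mp hx).2
  · intro hv
    obtain ⟨u, hu⟩ := Complex.exists_units_zpow_eq (v ^ T 0 1)⁻¹ h0
    refine ⟨⟨(u, v), mem_ker_monomialHom.mpr ⟨?_, by simpa [hT]⟩⟩, rfl⟩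
    rw [hu, inv_mul_cancel]

lemma card_ker_monomialHom_of_apply_one_zero {T : Matrix (Fin 2) (Fin 2) ℤ} (hT : T 1 0 = 0)
    (hdet : T.det ≠ 0) : Nat.card (monomialHom (G := ℂˣ) T).ker = T.det.natAbs := by
  have hdet' : T.det = T 0 0 * T 1 1 := by simp [det_fin_two, hT]
  obtain ⟨h0, h1⟩ : T 0 0 ≠ 0 ∧ T 1 1 ≠ 0 := mul_ne_zero_iff.mp (hdet' ▸ hdet)
  have : NeZero (T 0 0).natAbs := ⟨Int.natAbs_ne_zero.mpr h0⟩
  have : NeZero (T 1 1).natAbs := ⟨Int.natAbs_ne_zero.mpr h1⟩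
  set K := (monomialHom (G := ℂˣ) T).ker
  let π : K →* ℂˣ := (MonoidHom.snd ℂˣ ℂˣ).comp K.subtype
  let ρ : π.ker →* ℂˣ := (MonoidHom.fst ℂˣ ℂˣ).comp (K.subtype.comp π.ker.subtype)
  have hρ : Function.Injective ρ := fun x y hxy =>
    Subtype.ext <| Subtype.ext <| Prod.ext hxy (x.2.trans y.2.symm)
  have hrange_ρ : ρ.range = rootsOfUnity (T 0 0).natAbs ℂ := by
    ext u
    simp only [MonoidHom.mem_range, mem_rootsOfUnity, pow_natAbs_eq_one]
    constructor
    · rintro ⟨⟨⟨x, hxK⟩, hxπ : x.2 = 1⟩, rfl⟩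
      simpa [ρ, hxπ] using (mem_ker_monomialHom.mp hxK).1
    · intro hu
      exact ⟨⟨⟨(u, 1), mem_ker_monomialHom.mpr ⟨by simpa, by simp [hT]⟩⟩, rfl⟩, rfl⟩
  calc Nat.card K = Nat.card π.ker * Nat.card π.range := by
        rw [← Subgroup.index_ker, π.ker.card_mul_index]
    _ = Nat.card ρ.range * Nat.card π.range := by
      rw [Nat.card_congr (MonoidHom.ofInjective hρ).toEquiv]
    _ = T.det.natAbs := by
      rw [hrange_ρ, range_snd_comp_ker_monomialHom hT h0, Complex.card_rootsOfUnity,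
        Complex.card_rootsOfUnity, hdet', Int.natAbs_mul]

lemma card_ker_monomialHom {A : Matrix (Fin 2) (Fin 2) ℤ} (hA : A.det ≠ 0) :
    Nat.card (monomialHom (G := ℂˣ) A).ker = A.det.natAbs := by
  obtain ⟨P, hP, hPA⟩ := exists_det_eq_one_mul_apply_one_zero A
  have hdet : (P * A).det = A.det := by rw [det_mul, hP, one_mul]
  rw [← ker_monomialHom_mul ((isUnit_iff_isUnit_det P).mpr (hP ▸ isUnit_one)), ← hdet]
  exact card_ker_monomialHom_of_apply_one_zero hPA (hdet ▸ hA)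

lemma norm_eq_one_of_mem_ker_monomialHom {A : Matrix (Fin 2) (Fin 2) ℤ} (hA : A.det ≠ 0)
    {k : ℂˣ × ℂˣ} (hk : k ∈ (monomialHom A).ker) :
    ‖(k.1 : ℂ)‖ = 1 ∧ ‖(k.2 : ℂ)‖ = 1 := by
  have hpow : k.1 ^ A.det.natAbs = 1 ∧ k.2 ^ A.det.natAbs = 1 := by
    simpa [pow_natAbs_eq_one, Prod.ext_iff] using pow_det_eq_one_of_mem_ker hk
  have hn : A.det.natAbs ≠ 0 := Int.natAbs_ne_zero.mpr hA
  exact ⟨Complex.norm_eq_one_of_pow_eq_one (by simpa using congrArg Units.val hpow.1) hn,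
    Complex.norm_eq_one_of_pow_eq_one (by simpa using congrArg Units.val hpow.2) hn⟩

def monomialMap (A : Matrix (Fin 2) (Fin 2) ℕ) (p : ℂ × ℂ) : ℂ × ℂ :=
  (p.1 ^ A 0 0 * p.2 ^ A 0 1, p.1 ^ A 1 0 * p.2 ^ A 1 1)

section MonomialMap

variable {A : Matrix (Fin 2) (Fin 2) ℕ}

local notation "ι" => Prod.map (Units.val : ℂˣ → ℂ) (Units.val : ℂˣ → ℂ)

lemma monomialMap_units (x : ℂˣ × ℂˣ) :
    monomialMap A (ι x) = ι (monomialHom (A.map (↑)) x) := by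
  simp [monomialMap]

lemma monomialMap_eq_zero (hA : ∀ i j, 0 < A i j) {p : ℂ × ℂ} (hp : p.1 = 0 ∨ p.2 = 0) :
    monomialMap A p = 0 := by
  rcases hp with hp | hp <;> simp [monomialMap, hp, (hA _ _).ne']

lemma infinite_preimage_monomialMap_zero (hA : ∀ i j, 0 < A i j) :
    (monomialMap A ⁻¹' {0}).Infinite :=
  Set.infinite_of_injective_forall_mem (f := fun w : ℂ => ((0, w) : ℂ × ℂ))
    (fun _ _ h => (Prod.mk.inj h).2) fun _ => monomialMap_eq_zero hA (Or.inl rfl)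

lemma preimage_monomialMap_units (hA : ∀ i j, 0 < A i j) (x : ℂˣ × ℂˣ) :
    monomialMap A ⁻¹' {monomialMap A (ι x)} =
      (fun k => ι (x * k)) '' (monomialHom (G := ℂˣ) (A.map (↑))).ker := by
  ext q
  simp only [Set.mem_preimage, Set.mem_singleton_iff, Set.mem_image, SetLike.mem_coe,
    MonoidHom.mem_ker]
  constructor
  · intro hq
    obtain ⟨hq1, hq2⟩ : q.1 ≠ 0 ∧ q.2 ≠ 0 := not_or.mp fun h0 => by
      rw [monomialMap_eq_zero hA h0, monomialMap_units] at hq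
      exact (monomialHom _ x).1.ne_zero (congrArg Prod.fst hq).symm
    let y : ℂˣ × ℂˣ := (Units.mk0 q.1 hq1, Units.mk0 q.2 hq2)
    have hy : ι y = q := rfl
    refine ⟨x⁻¹ * y, ?_, by rw [mul_inv_cancel_left, hy]⟩
    rw [← hy, monomialMap_units, monomialMap_units] at hq
    rw [map_mul, map_inv, Prod.map_injective.mpr ⟨Units.val_injective, Units.val_injective⟩ hq,
      inv_mul_cancel]
  · rintro ⟨k, hk, rfl⟩
    rw [monomialMap_units, monomialMap_units, map_mul, hk, mul_one]

variable (hA : ∀ i j, 0 < A i j) (hdet : (A.map ((↑) : ℕ → ℤ)).det ≠ 0)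
include hA hdet

lemma ncard_preimage_monomialMap_units (x : ℂˣ × ℂˣ) :
    (monomialMap A ⁻¹' {monomialMap A (ι x)}).ncard =
      (A.map ((↑) : ℕ → ℤ)).det.natAbs := by
  have hι : Function.Injective ι :=
    Prod.map_injective.mpr ⟨Units.val_injective, Units.val_injective⟩
  rw [preimage_monomialMap_units hA,
    Set.ncard_image_of_injective _ fun _ _ h => mul_left_cancel (hι h), ← Nat.card_coe_set_eq,
    SetLike.coe_sort_coe, card_ker_monomialHom hdet]

lemma norm_of_mem_preimage_monomialMap_units (x : ℂˣ × ℂˣ) {q : ℂ × ℂ}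
    (hq : q ∈ monomialMap A ⁻¹' {monomialMap A (ι x)}) : ‖q‖ = ‖ι x‖ := by
  rw [preimage_monomialMap_units hA] at hq
  obtain ⟨k, hk, rfl⟩ := hq
  obtain ⟨hk1, hk2⟩ := norm_eq_one_of_mem_ker_monomialHom hdet hk
  simp [Prod.norm_def, hk1, hk2]

lemma ncard_preimage_monomialMap_le (y : ℂ × ℂ) (hy : (monomialMap A ⁻¹' {y}).Finite) :
    (monomialMap A ⁻¹' {y}).ncard ≤ (A.map ((↑) : ℕ → ℤ)).det.natAbs := by
  obtain hempty | ⟨q, rfl : monomialMap A q = y⟩ :=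
    (monomialMap A ⁻¹' {y}).eq_empty_or_nonempty
  · simp [hempty]
  by_cases hq : q.1 = 0 ∨ q.2 = 0
  · rw [monomialMap_eq_zero hA hq] at hy
    exact absurd hy (infinite_preimage_monomialMap_zero hA)
  · obtain ⟨hq1, hq2⟩ := not_or.mp hq
    exact (ncard_preimage_monomialMap_units hA hdet (Units.mk0 _ hq1, Units.mk0 _ hq2)).le

lemma exists_preimage_monomialMap_subset_ball {ε : ℝ} (hε : 0 < ε) :
    ∃ y, monomialMap A ⁻¹' {y} ⊆ Metric.ball 0 ε ∧
      (monomialMap A ⁻¹' {y}).ncard = (A.map ((↑) : ℕ → ℤ)).det.natAbs := by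
  let r : ℂˣ := Units.mk0 ((ε / 2 : ℝ) : ℂ) (by exact_mod_cast (half_pos hε).ne')
  refine ⟨monomialMap A (ι (r, r)), fun q hq => ?_, ncard_preimage_monomialMap_units hA hdet _⟩
  rw [mem_ball_zero_iff, norm_of_mem_preimage_monomialMap_units hA hdet _ hq]
  simp [r, Prod.norm_def, abs_of_pos hε, hε]

end MonomialMap

section TopologicalDegree

variable {Ω : Set (ℂ × ℂ)} {f : ℂ × ℂ → ℂ × ℂ} {n : ℕ∞}

lemma topdeg_le_of_forall_ncard_le {U : Set (ℂ × ℂ)} (hU : IsOpen U) (hU0 : 0 ∈ U)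
    (hUΩ : U ⊆ Ω) (h : ∀ y, (U ∩ f ⁻¹' {y}).Finite → ((U ∩ f ⁻¹' {y}).ncard : ℕ∞) ≤ n) :
    topdeg Ω f ≤ n :=
  iInf₂_le_of_le U ⟨hU, hU0, hUΩ⟩ (iSup₂_le h)

lemma le_topdeg_of_forall_exists
    (h : ∀ U, IsOpen U → 0 ∈ U → U ⊆ Ω →
      ∃ y, (U ∩ f ⁻¹' {y}).Finite ∧ n ≤ ((U ∩ f ⁻¹' {y}).ncard : ℕ∞)) :
    n ≤ topdeg Ω f :=
  le_iInf₂ fun U ⟨hU, hU0, hUΩ⟩ =>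
    let ⟨y, hfin, hy⟩ := h U hU hU0 hUΩ
    le_iSup₂_of_le y hfin hy

end TopologicalDegree

/-- The topological degree at `0` of the monomial map
`f_A(z,w) = (z^a w^b, z^c w^d)`, for positive integers `a, b, c, d` with `ad - bc ≠ 0`,
equals `|ad - bc|`. -/
theorem topdeg_monomial_map
    (a b c d : ℕ) (ha : 0 < a) (hb : 0 < b) (hc : 0 < c) (hd : 0 < d)
    (hdet : (a : ℤ) * d - (b : ℤ) * c ≠ 0)
    (f : ℂ × ℂ → ℂ × ℂ)
    (hf : ∀ p : ℂ × ℂ, f p = (p.1 ^ a * p.2 ^ b, p.1 ^ c * p.2 ^ d)) :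
    topdeg Set.univ f = (((a : ℤ) * d - (b : ℤ) * c).natAbs : ℕ∞) := by
  obtain rfl : f = monomialMap !![a, b; c, d] := funext fun p => by simp [hf, monomialMap]
  have hA : ∀ i j, 0 < !![a, b; c, d] i j := by simp [Fin.forall_fin_two, *]
  have hdetA : (Matrix.map !![a, b; c, d] ((↑) : ℕ → ℤ)).det = a * d - b * c := by
    simp [det_fin_two]
  rw [← hdetA] at hdet ⊢
  apply le_antisymm
  · refine topdeg_le_of_forall_ncard_le isOpen_univ (Set.mem_univ 0) subset_rfl fun y hy => ?_
    rw [Set.univ_inter] at hy ⊢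
    exact_mod_cast ncard_preimage_monomialMap_le hA hdet y hy
  · refine le_topdeg_of_forall_exists fun U hU hU0 _ => ?_
    obtain ⟨ε, hε, hball⟩ := Metric.isOpen_iff.mp hU 0 hU0
    obtain ⟨y, hsub, hcard⟩ := exists_preimage_monomialMap_subset_ball hA hdet hε
    refine ⟨y, ?_⟩
    rw [Set.inter_eq_right.mpr (hsub.trans hball), hcard]
    exact ⟨Set.finite_of_ncard_ne_zero (hcard ▸ Int.natAbs_ne_zero.mpr hdet), le_rfl⟩
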